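/- Let E₀, E₁, …, E_h be real normed vector spaces, and for k = 1,…,h let g_k : E_{k-1} → E_k be Lipschitz with constant L_k ≥ 0. Let (Ω, ℱ, μ) be a probability space and, for k = 1,…,h, let e_k : Ω → E_k be strongly measurable random elements with E[‖e_k‖²] ≤ s_k < ∞. Fix x ∈ E₀ and define, for each ω ∈ Ω, ỹ₀ = y₀(ω) = x, ỹ_k = g_k(ỹ_{k-1}) and y_k(ω) = g_k(y_{k-1}(ω)) + e_k(ω). Then E[‖y_h − ỹ_h‖²] ≤ h · Σ_{k=1}^h ( Π_{j=k+1}^h L_j² ) s_k, where the empty product equals 1. -/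

import Mathlib

/-!
Unrolling the recursion with the triangle inequality and the Lipschitz bounds gives the pointwise
bound `‖y_h - ỹ_h‖ ≤ ∑_k (∏_{j>k} L_j) ‖e_k‖`; Cauchy–Schwarz over the `h` summands turns its
square into `h ∑_k (∏_{j>k} L_j²) ‖e_k‖²`, and integrating gives the claim.
-/

open MeasureTheory Finset

/-- Discrete Grönwall inequality. -/
theorem le_sum_prod_mul_of_le_mul_add {d L b : ℕ → ℝ} (hL : ∀ k, 0 ≤ L k) (hd0 : d 0 ≤ 0)
    (hstep : ∀ n, d (n + 1) ≤ L n * d n + b n) (n : ℕ) :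
    d n ≤ ∑ k ∈ range n, (∏ j ∈ Ico (k + 1) n, L j) * b k := by
  induction n with
  | zero => simpa using hd0
  | succ n ih =>
    calc d (n + 1) ≤ L n * ∑ k ∈ range n, (∏ j ∈ Ico (k + 1) n, L j) * b k + b n :=
          (hstep n).trans (by gcongr; exact hL n)
      _ = ∑ k ∈ range (n + 1), (∏ j ∈ Ico (k + 1) (n + 1), L j) * b k := by
          rw [sum_range_succ, Ico_self, prod_empty, one_mul, mul_sum]
          congr 1
          refine sum_congr rfl fun k hk => ?_
          rw [prod_Ico_succ_top (mem_range.mp hk)]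
          ring

section LipschitzChain

variable {E : ℕ → Type*} [∀ k, SeminormedAddCommGroup (E k)]
  {g : ∀ k, E k → E (k + 1)} {L : ℕ → ℝ} {e : ∀ k, E (k + 1)} {y ytil : ∀ k, E k}

theorem norm_sub_le_sum_prod_lipschitz_mul_norm (hL : ∀ k, 0 ≤ L k)
    (hLip : ∀ k, ∀ u v : E k, ‖g k u - g k v‖ ≤ L k * ‖u - v‖) (h0 : y 0 = ytil 0)
    (hytil : ∀ k, ytil (k + 1) = g k (ytil k)) (hy : ∀ k, y (k + 1) = g k (y k) + e k) (n : ℕ) :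
    ‖y n - ytil n‖ ≤ ∑ k ∈ range n, (∏ j ∈ Ico (k + 1) n, L j) * ‖e k‖ := by
  refine le_sum_prod_mul_of_le_mul_add (d := fun n => ‖y n - ytil n‖) hL (by simp [h0])
    (fun k => ?_) n
  calc ‖y (k + 1) - ytil (k + 1)‖ = ‖(g k (y k) - g k (ytil k)) + e k‖ := by
        rw [hy, hytil, add_sub_right_comm]
    _ ≤ L k * ‖y k - ytil k‖ + ‖e k‖ := (norm_add_le _ _).trans (by gcongr; exact hLip k _ _)

theorem norm_sub_sq_le_card_mul_sum_prod_sq_mul_norm_sq (hL : ∀ k, 0 ≤ L k)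
    (hLip : ∀ k, ∀ u v : E k, ‖g k u - g k v‖ ≤ L k * ‖u - v‖) (h0 : y 0 = ytil 0)
    (hytil : ∀ k, ytil (k + 1) = g k (ytil k)) (hy : ∀ k, y (k + 1) = g k (y k) + e k) (n : ℕ) :
    ‖y n - ytil n‖ ^ 2 ≤ n * ∑ k ∈ range n, (∏ j ∈ Ico (k + 1) n, L j ^ 2) * ‖e k‖ ^ 2 :=
  calc ‖y n - ytil n‖ ^ 2 ≤ (∑ k ∈ range n, (∏ j ∈ Ico (k + 1) n, L j) * ‖e k‖) ^ 2 := by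
        gcongr; exact norm_sub_le_sum_prod_lipschitz_mul_norm hL hLip h0 hytil hy n
    _ ≤ #(range n) * ∑ k ∈ range n, ((∏ j ∈ Ico (k + 1) n, L j) * ‖e k‖) ^ 2 :=
        sq_sum_le_card_mul_sum_sq
    _ = n * ∑ k ∈ range n, (∏ j ∈ Ico (k + 1) n, L j ^ 2) * ‖e k‖ ^ 2 := by
        simp only [card_range, mul_pow, prod_pow]

end LipschitzChain

theorem noise_propagation_mean_squared_bound_general
    {Ω : Type*} [MeasurableSpace Ω] (μ : Measure Ω)
    (h : ℕ) (E : ℕ → Type*) [∀ k, NormedAddCommGroup (E k)]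
    (g : ∀ k, E k → E (k + 1)) (L : ℕ → ℝ) (hL : ∀ k, 0 ≤ L k)
    (hLip : ∀ k, ∀ u v : E k, ‖g k u - g k v‖ ≤ L k * ‖u - v‖)
    (e : ∀ k, Ω → E (k + 1))
    (s : ℕ → ℝ)
    (hInt : ∀ k, Integrable (fun ω => ‖e k ω‖ ^ 2) μ)
    (hs : ∀ k, ∫ ω, ‖e k ω‖ ^ 2 ∂μ ≤ s k)
    (x : E 0)
    (ytil : ∀ k, E k) (y : ∀ k, Ω → E k)
    (hytil0 : ytil 0 = x) (hytil : ∀ k, ytil (k + 1) = g k (ytil k))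
    (hy0 : ∀ ω, y 0 ω = x) (hy : ∀ k ω, y (k + 1) ω = g k (y k ω) + e k ω) :
    ∫ ω, ‖y h ω - ytil h‖ ^ 2 ∂μ ≤
      h * ∑ k ∈ Finset.range h, (∏ j ∈ Finset.Ico (k + 1) h, L j ^ 2) * s k := by
  have hpointwise (ω : Ω) := norm_sub_sq_le_card_mul_sum_prod_sq_mul_norm_sq (e := (e · ω))
    (y := (y · ω)) hL hLip (by rw [hy0, hytil0]) hytil (hy · ω) h
  have hterm (k : ℕ) : Integrable (fun ω => (∏ j ∈ Ico (k + 1) h, L j ^ 2) * ‖e k ω‖ ^ 2) μ :=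
    (hInt k).const_mul _
  calc ∫ ω, ‖y h ω - ytil h‖ ^ 2 ∂μ
      ≤ ∫ ω, h * ∑ k ∈ range h, (∏ j ∈ Ico (k + 1) h, L j ^ 2) * ‖e k ω‖ ^ 2 ∂μ :=
        integral_mono_of_nonneg (ae_of_all _ fun _ => by positivity)
          ((integrable_finsetSum _ fun k _ => hterm k).const_mul _) (ae_of_all _ hpointwise)
    _ = h * ∑ k ∈ range h, (∏ j ∈ Ico (k + 1) h, L j ^ 2) * ∫ ω, ‖e k ω‖ ^ 2 ∂μ := by
        simp only [integral_const_mul, integral_finsetSum _ fun k _ => hterm k]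
    _ ≤ h * ∑ k ∈ range h, (∏ j ∈ Ico (k + 1) h, L j ^ 2) * s k := by
        gcongr with k
        exact hs k

/-- Mean-squared noise amplification through a chain of Lipschitz maps: if
`ỹ_{k+1} = g_k(ỹ_k)` is the noiseless recursion and `y_{k+1}(ω) = g_k(y_k(ω)) + e_k(ω)`
is the noisy recursion with common initial point `x`, where each `g_k` is Lipschitz
with constant `L_k ≥ 0` and the random noises satisfy `E‖e_k‖² ≤ s_k < ∞`, then
`E‖y_h − ỹ_h‖² ≤ h · Σ_{k<h} (Π_{k+1 ≤ j < h} L_j²) s_k` (empty products equal 1). -/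
theorem noise_propagation_mean_squared_bound
    {Ω : Type*} [MeasurableSpace Ω] (μ : Measure Ω) [IsProbabilityMeasure μ]
    (h : ℕ) (E : ℕ → Type*) [∀ k, NormedAddCommGroup (E k)] [∀ k, NormedSpace ℝ (E k)]
    (g : ∀ k, E k → E (k + 1)) (L : ℕ → ℝ) (hL : ∀ k, 0 ≤ L k)
    (hLip : ∀ k, ∀ u v : E k, ‖g k u - g k v‖ ≤ L k * ‖u - v‖)
    (e : ∀ k, Ω → E (k + 1)) (hmeas : ∀ k, StronglyMeasurable (e k))
    (s : ℕ → ℝ)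
    (hInt : ∀ k, Integrable (fun ω => ‖e k ω‖ ^ 2) μ)
    (hs : ∀ k, ∫ ω, ‖e k ω‖ ^ 2 ∂μ ≤ s k)
    (x : E 0)
    (ytil : ∀ k, E k) (y : ∀ k, Ω → E k)
    (hytil0 : ytil 0 = x) (hytil : ∀ k, ytil (k + 1) = g k (ytil k))
    (hy0 : ∀ ω, y 0 ω = x) (hy : ∀ k ω, y (k + 1) ω = g k (y k ω) + e k ω) :
    ∫ ω, ‖y h ω - ytil h‖ ^ 2 ∂μ ≤
      h * ∑ k ∈ Finset.range h, (∏ j ∈ Finset.Ico (k + 1) h, L j ^ 2) * s k :=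
  noise_propagation_mean_squared_bound_general μ h E g L hL hLip e s hInt hs x ytil y hytil0 hytil
    hy0 hy
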